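/- arXiv:2207.07380 — 3 statements merged into one kernel-verified Lean document; each statement's English description precedes it below -/
import Mathlib

section
/- The radial Zernike polynomials of fixed azimuthal order m satisfy the orthogonality relation \int_0^1 R_n^m(r) R_{n'}^m(r) r\,dr = \delta_{n n'} / (2n + 2). -/
open scoped Real BigOperators

/-- Radial part of the Zernike polynomial. -/
noncomputable def Rz (n m : ℕ) (r : ℝ) : ℝ :=
  ∑ ℓ ∈ Finset.range ((n - m) / 2 + 1),
    (-1 : ℝ) ^ ℓ * (Nat.factorial (n - ℓ) : ℝ) /
      ((Nat.factorial ℓ : ℝ) * (Nat.factorial ((n - m) / 2 - ℓ) : ℝ) *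
        (Nat.factorial ((n + m) / 2 - ℓ) : ℝ)) *
      r ^ (n - 2 * ℓ)

open Polynomial Finset

noncomputable def PI (p : Polynomial ℝ) : ℝ := ∫ r in (0:ℝ)..1, p.eval r

lemma PI_deriv (p : Polynomial ℝ) : PI (derivative p) = p.eval 1 - p.eval 0 := by
  unfold PI
  exact intervalIntegral.integral_eq_sub_of_hasDerivAt
    (fun x _ => p.hasDerivAt x) ((p.derivative.continuous_aeval).intervalIntegrable _ _)

lemma PI_X_pow (a : ℕ) : PI (X ^ a) = 1 / (a + 1) := by
  unfold PI
  simp [integral_pow]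

lemma PI_sum {s : Finset ℕ} (f : ℕ → Polynomial ℝ) : PI (∑ i ∈ s, f i) = ∑ i ∈ s, PI (f i) := by
  unfold PI
  rw [← intervalIntegral.integral_finset_sum]
  · simp [Polynomial.eval_finset_sum]
  · exact fun i _ => ((f i).continuous_aeval).intervalIntegrable _ _

lemma PI_C_mul (c : ℝ) (p : Polynomial ℝ) : PI (C c * p) = c * PI p := by
  unfold PI
  simp [← intervalIntegral.integral_const_mul]

lemma PI_add (p q : Polynomial ℝ) : PI (p + q) = PI p + PI q := by
  unfold PI
  rw [← intervalIntegral.integral_add (p.continuous.intervalIntegrable _ _)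
    (q.continuous.intervalIntegrable _ _)]
  simp

lemma PI_ibp (q p : Polynomial ℝ) :
    PI (q * derivative p) =
      q.eval 1 * p.eval 1 - q.eval 0 * p.eval 0 - PI (derivative q * p) := by
  have h := PI_deriv (q * p)
  rw [derivative_mul, PI_add] at h
  simp only [eval_mul] at h
  linarith

lemma iter_deriv_factor (a b : ℕ) : ∀ r, r ≤ a → r ≤ b →
    ∃ q : Polynomial ℝ, derivative^[r] (X ^ a * (1 - X) ^ b) =
      X ^ (a - r) * (1 - X) ^ (b - r) * q := by
  intro r
  induction r with
  | zero => exact fun _ _ => ⟨1, by simp⟩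
  | succ r ih =>
    intro hra hrb
    obtain ⟨q, hq⟩ := ih (by omega) (by omega)
    refine ⟨(C ((a - r : ℕ) : ℝ)) * (1 - X) * q - (C ((b - r : ℕ) : ℝ)) * X * q
      + X * (1 - X) * derivative q, ?_⟩
    rw [Function.iterate_succ_apply', hq]
    have h1 : a - r = (a - (r+1)) + 1 := by omega
    have h2 : b - r = (b - (r+1)) + 1 := by omega
    rw [h1, h2]
    simp only [derivative_mul, derivative_pow, derivative_X, derivative_one, derivative_sub,
      Nat.cast_add, Nat.cast_one, Nat.add_sub_cancel, C_add, C_1]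
    push_cast
    ring

lemma iter_deriv_boundary (a b r : ℕ) (hra : r < a) (hrb : r < b) :
    (derivative^[r] (X ^ a * (1 - X) ^ b) : Polynomial ℝ).eval 0 = 0 ∧
    (derivative^[r] (X ^ a * (1 - X) ^ b) : Polynomial ℝ).eval 1 = 0 := by
  obtain ⟨q, hq⟩ := iter_deriv_factor a b r (le_of_lt hra) (le_of_lt hrb)
  rw [hq]
  constructor <;> simp [zero_pow, Nat.sub_ne_zero_of_lt, hra, hrb]

/-- Beta integral for polynomials. -/
lemma PI_beta : ∀ b a : ℕ, PI ((X : Polynomial ℝ) ^ a * (1 - X) ^ b) =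
    (Nat.factorial a : ℝ) * (Nat.factorial b) / (Nat.factorial (a + b + 1)) := by
  intro b
  induction b with
  | zero =>
    intro a
    simp [PI_X_pow, Nat.factorial_succ]
    rw [inv_eq_one_div, div_eq_div_iff (by positivity) (by positivity)]
    ring
  | succ b ih =>
    intro a
    have key : PI (derivative ((X:Polynomial ℝ) ^ (a+1) * (1 - X) ^ (b+1))) = 0 := by
      rw [PI_deriv]
      simp [zero_pow]
    have expand : derivative ((X:Polynomial ℝ) ^ (a+1) * (1 - X) ^ (b+1)) =
        C ((a:ℝ)+1) * (X ^ a * (1 - X) ^ (b+1)) - C ((b:ℝ)+1) * (X ^ (a+1) * (1 - X) ^ b) := by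
      simp only [derivative_mul, derivative_pow, derivative_X, derivative_sub, derivative_one]
      push_cast
      ring
    rw [expand] at key
    rw [sub_eq_add_neg, ← neg_mul, ← C_neg, PI_add, PI_C_mul, PI_C_mul, ih] at key
    have key2 : ((a:ℝ)+1) * PI (X ^ a * (1 - X) ^ (b+1)) =
        ((b:ℝ)+1) * ((Nat.factorial (a+1) : ℝ) * (Nat.factorial b) / (Nat.factorial (a+1+b+1))) := by
      linarith
    have hfac : (a + (b+1) + 1) = (a+1+b+1) := by omega
    rw [hfac]
    have ha1 : ((a:ℝ)+1) ≠ 0 := by positivity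
    field_simp at key2 ⊢
    apply mul_left_cancel₀ ha1
    rw [← mul_assoc, key2, Nat.factorial_succ a, Nat.factorial_succ b]
    push_cast
    ring

lemma PI_reduce (m k' : ℕ) : ∀ d, ∀ j, d ≤ j → d ≤ k' →
    PI ((X:Polynomial ℝ)^j * derivative^[k'] (X^(m+k')*(1-X)^k')) =
    (-1:ℝ)^d * (j.descFactorial d) *
      PI ((X:Polynomial ℝ)^(j-d) * derivative^[k'-d] (X^(m+k')*(1-X)^k')) := by
  intro d
  induction d with
  | zero => intro j _ _; simp
  | succ d ih =>
    intro j hdj hdk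
    rw [ih j (by omega) (by omega)]
    have hit : derivative^[k'-d] ((X:Polynomial ℝ)^(m+k')*(1-X)^k')
        = derivative (derivative^[k'-(d+1)] ((X:Polynomial ℝ)^(m+k')*(1-X)^k')) := by
      have hkd : k' - d = (k' - (d+1)) + 1 := by omega
      rw [hkd, Function.iterate_succ_apply']
    have hbd := iter_deriv_boundary (m+k') k' (k'-(d+1)) (by omega) (by omega)
    rw [hit, PI_ibp]
    rw [hbd.1, hbd.2]
    rw [derivative_X_pow]
    have hjd : j - d - 1 = j - (d+1) := by omega
    have hC : C ((j - d : ℕ) : ℝ) * X ^ (j - d - 1) *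
        derivative^[k'-(d+1)] ((X:Polynomial ℝ)^(m+k')*(1-X)^k')
        = C ((j - d : ℕ) : ℝ) * (X ^ (j - (d+1)) *
          derivative^[k'-(d+1)] ((X:Polynomial ℝ)^(m+k')*(1-X)^k')) := by
      rw [hjd, mul_assoc]
    rw [hC, PI_C_mul, Nat.descFactorial_succ]
    push_cast [Nat.cast_sub (show d ≤ j by omega)]
    ring

lemma J_lt (m k' j : ℕ) (h : j < k') :
    PI ((X:Polynomial ℝ)^j * derivative^[k'] (X^(m+k')*(1-X)^k')) = 0 := by
  rw [PI_reduce m k' j j le_rfl (le_of_lt h)]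
  have hkj : k' - j = (k' - j - 1) + 1 := by omega
  rw [Nat.sub_self, pow_zero, one_mul, hkj, Function.iterate_succ_apply', PI_deriv]
  have hbd := iter_deriv_boundary (m+k') k' (k'-j-1) (by omega) (by omega)
  rw [hbd.1, hbd.2]
  ring

lemma J_eq (m k' : ℕ) :
    PI ((X:Polynomial ℝ)^k' * derivative^[k'] (X^(m+k')*(1-X)^k')) =
    (-1:ℝ)^k' * (Nat.factorial k') *
      ((Nat.factorial (m+k') : ℝ) * (Nat.factorial k') / (Nat.factorial (m+2*k'+1))) := by
  rw [PI_reduce m k' k' k' le_rfl le_rfl]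
  have harith : m + k' + k' + 1 = m + 2*k' + 1 := by omega
  rw [Nat.sub_self, pow_zero, one_mul, Function.iterate_zero_apply, PI_beta,
    Nat.descFactorial_self, harith]

lemma one_sub_X_pow (k : ℕ) : ((1 - X : Polynomial ℝ))^k =
    ∑ i ∈ range (k+1), C ((-1:ℝ)^i * (k.choose i)) * X^i := by
  rw [sub_pow, ← Finset.sum_range_reflect]
  apply Finset.sum_congr rfl
  intro i hi
  rw [Finset.mem_range] at hi
  have hik : i ≤ k := by omega
  have h1 : k - (k - i) = i := by omega
  have h2 : k.choose (k - i) = k.choose i := Nat.choose_symm hik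
  have h3 : ((-1 : Polynomial ℝ))^(k - i + k) = (-1)^i := by
    rw [show k - i + k = i + 2*(k-i) by omega, pow_add, pow_mul]
    simp
  rw [show k + 1 - 1 - i = k - i by omega, h1, h2, h3, one_pow]
  simp only [C_mul, C_pow, C_neg, C_1, C_eq_natCast]
  ring

lemma J_sum (m k' j : ℕ) :
    PI ((X:Polynomial ℝ)^j * derivative^[k'] (X^(m+k')*(1-X)^k')) =
    ∑ i ∈ range (k'+1),
      (-1:ℝ)^i * (k'.choose i) * ((m+k'+i).descFactorial k') / ((m:ℝ)+j+i+1) := by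
  have h1 : (X:Polynomial ℝ)^(m+k')*(1-X)^k' =
      ∑ i ∈ range (k'+1), C ((-1:ℝ)^i * (k'.choose i)) * X^(m+k'+i) := by
    rw [one_sub_X_pow, Finset.mul_sum]
    apply Finset.sum_congr rfl
    intro i _
    rw [pow_add]
    ring
  rw [h1, Polynomial.iterate_derivative_sum]
  have h2 : ∀ i ∈ range (k'+1),
      derivative^[k'] (C ((-1:ℝ)^i * (k'.choose i)) * X^(m+k'+i)) =
      C ((-1:ℝ)^i * (k'.choose i) * ((m+k'+i).descFactorial k')) * X^(m+i) := by
    intro i _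
    rw [Polynomial.iterate_derivative_C_mul, Polynomial.iterate_derivative_X_pow_eq_C_mul]
    rw [show m + k' + i - k' = m + i by omega]
    simp only [C_mul, C_eq_natCast]
    ring
  rw [Finset.sum_congr rfl h2, Finset.mul_sum, PI_sum]
  apply Finset.sum_congr rfl
  intro i _
  have h3 : (X:Polynomial ℝ)^j * (C ((-1:ℝ)^i * (k'.choose i) * ((m+k'+i).descFactorial k')) * X^(m+i))
      = C ((-1:ℝ)^i * (k'.choose i) * ((m+k'+i).descFactorial k')) * X^(j+(m+i)) := by
    rw [pow_add]; ring
  rw [h3, PI_C_mul, PI_X_pow]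
  push_cast
  rw [mul_one_div, show (j:ℝ)+(m+i)+1 = m+j+i+1 by ring]

noncomputable def Rc (k m ℓ : ℕ) : ℝ :=
  (-1:ℝ)^ℓ * (Nat.factorial (m+2*k-ℓ)) /
    ((Nat.factorial ℓ) * (Nat.factorial (k-ℓ)) * (Nat.factorial (m+k-ℓ)))

noncomputable def RzP (k m : ℕ) : Polynomial ℝ :=
  ∑ ℓ ∈ range (k+1), C (Rc k m ℓ) * X^(m+2*(k-ℓ))

lemma Rz_eval (k m : ℕ) (r : ℝ) : Rz (m+2*k) m r = (RzP k m).eval r := by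
  unfold Rz RzP Rc
  rw [show (m+2*k-m)/2 = k by omega]
  rw [eval_finset_sum]
  apply Finset.sum_congr rfl
  intro ℓ hℓ
  rw [Finset.mem_range] at hℓ
  rw [show (m+2*k+m)/2 - ℓ = m+k-ℓ by omega, show m+2*k-2*ℓ = m+2*(k-ℓ) by omega]
  simp [eval_mul, eval_pow]

lemma M_eq (m k' j : ℕ) :
    PI ((X:Polynomial ℝ)^(m+2*j) * RzP k' m * X) =
    ((-1:ℝ)^k' / (2 * (Nat.factorial k'))) *
      PI ((X:Polynomial ℝ)^j * derivative^[k'] (X^(m+k')*(1-X)^k')) := by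
  have h1 : (X:Polynomial ℝ)^(m+2*j) * RzP k' m * X =
      ∑ ℓ ∈ range (k'+1), C (Rc k' m ℓ) * X^(m+2*j+(m+2*(k'-ℓ))+1) := by
    unfold RzP
    rw [Finset.mul_sum, Finset.sum_mul]
    apply Finset.sum_congr rfl
    intro ℓ _
    rw [pow_add, pow_add]
    ring
  rw [h1, PI_sum]
  have h2 : ∀ ℓ ∈ range (k'+1),
      PI (C (Rc k' m ℓ) * X^(m+2*j+(m+2*(k'-ℓ))+1)) =
      Rc k' m ℓ / (((m+2*j+(m+2*(k'-ℓ))+1 : ℕ) : ℝ)+1) := by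
    intro ℓ hℓ
    rw [PI_C_mul, PI_X_pow, mul_one_div]
  rw [Finset.sum_congr rfl h2, J_sum, Finset.mul_sum,
    ← Finset.sum_range_reflect
      (fun ℓ => Rc k' m ℓ / (((m+2*j+(m+2*(k'-ℓ))+1 : ℕ) : ℝ)+1)) (k'+1)]
  apply Finset.sum_congr rfl
  intro i hi
  rw [Finset.mem_range] at hi
  have hik : i ≤ k' := by omega
  rw [show k' + 1 - 1 - i = k' - i by omega]
  unfold Rc
  rw [show k' - (k' - i) = i by omega, show m + 2*k' - (k'-i) = m+k'+i by omega,
    show m + k' - (k'-i) = m + i by omega]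
  have hnat : Nat.factorial (m+i) * (m+k'+i).descFactorial k' = Nat.factorial (m+k'+i) := by
    have h := Nat.factorial_mul_descFactorial (show k' ≤ m+k'+i by omega)
    rwa [show m+k'+i-k' = m+i by omega] at h
  have hdesc : (((m+k'+i).descFactorial k' : ℕ) : ℝ) =
      (Nat.factorial (m+k'+i) : ℝ) / (Nat.factorial (m+i)) := by
    rw [eq_div_iff (by positivity), mul_comm]
    exact_mod_cast congrArg (Nat.cast (R := ℝ)) hnat
  have hsgn : (-1:ℝ)^(k'-i) = (-1)^k' * (-1)^i := by
    rw [← pow_add, show k'+i = (k'-i)+2*i by omega, pow_add, pow_mul]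
    simp
  rw [hdesc, Nat.cast_choose ℝ hik, hsgn]
  have f1 : (Nat.factorial (k'-i) : ℝ) ≠ 0 := by positivity
  have f2 : (Nat.factorial i : ℝ) ≠ 0 := by positivity
  have f3 : (Nat.factorial (m+i) : ℝ) ≠ 0 := by positivity
  have f4 : (Nat.factorial k' : ℝ) ≠ 0 := by positivity
  have f5 : ((m:ℝ) + j + i + 1) ≠ 0 := by positivity
  have f6 : (((m + 2*j + (m + 2*i) + 1 : ℕ)):ℝ) + 1 ≠ 0 := by positivity
  field_simp
  push_cast
  ring

lemma main_le (m k k' : ℕ) (hkk : k ≤ k') :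
    PI (RzP k m * RzP k' m * X) =
    if k = k' then 1/(2*((m+2*k:ℕ):ℝ)+2) else 0 := by
  have hexp : RzP k m * RzP k' m * X =
      ∑ ℓ ∈ range (k+1), C (Rc k m ℓ) * (X^(m+2*(k-ℓ)) * RzP k' m * X) := by
    conv_lhs => rw [show RzP k m = ∑ ℓ ∈ range (k+1), C (Rc k m ℓ) * X^(m+2*(k-ℓ)) from rfl]
    rw [Finset.sum_mul, Finset.sum_mul]
    apply Finset.sum_congr rfl
    intro ℓ _
    ring
  rw [hexp, PI_sum]
  have hterm : ∀ ℓ ∈ range (k+1),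
      PI (C (Rc k m ℓ) * (X^(m+2*(k-ℓ)) * RzP k' m * X)) =
      Rc k m ℓ * (((-1:ℝ)^k' / (2 * (Nat.factorial k'))) *
        PI ((X:Polynomial ℝ)^(k-ℓ) * derivative^[k'] (X^(m+k')*(1-X)^k'))) := by
    intro ℓ _
    rw [PI_C_mul, M_eq]
  rw [Finset.sum_congr rfl hterm]
  by_cases hk : k = k'
  · subst hk
    rw [if_pos rfl]
    rw [Finset.sum_eq_single_of_mem 0 (Finset.mem_range.2 (by omega))]
    · rw [Nat.sub_zero, J_eq]
      unfold Rc
      rw [Nat.sub_zero, Nat.sub_zero, Nat.sub_zero, Nat.factorial_zero]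
      have f1 : (Nat.factorial k : ℝ) ≠ 0 := by positivity
      have f2 : (Nat.factorial (m+k) : ℝ) ≠ 0 := by positivity
      have f3 : (Nat.factorial (m+2*k) : ℝ) ≠ 0 := by positivity
      have hsq : ((-1:ℝ))^k * ((-1:ℝ))^k = 1 := by
        rw [← pow_add]
        simp [pow_mul, show k + k = 2*k by ring, pow_mul]
      have hc : ∀ B:ℝ, ((-1:ℝ)^k / (2*(Nat.factorial k))) *
          ((-1:ℝ)^k * (Nat.factorial k) * B) = B/2 := by
        intro B
        rw [div_mul_eq_mul_div, show (-1:ℝ)^k * ((-1:ℝ)^k * (Nat.factorial k) * B) =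
          (((-1:ℝ)^k * (-1)^k)) * ((Nat.factorial k) * B) from by ring, hsq, one_mul]
        rw [mul_comm (2:ℝ) _, mul_div_mul_left _ _ f1]
      rw [hc]
      rw [show (m+2*k+1).factorial = (m+2*k+1) * (m+2*k).factorial from Nat.factorial_succ _]
      have f4 : ((m:ℝ)+2*(k:ℝ)+1) ≠ 0 := by positivity
      rw [pow_zero, Nat.cast_one]
      push_cast
      field_simp
    · intro ℓ hℓ hne
      rw [J_lt m k (k-ℓ) (by simp at hℓ; omega)]
      ring
  · rw [if_neg hk]
    apply Finset.sum_eq_zero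
    intro ℓ _
    rw [J_lt m k' (k-ℓ) (by omega)]
    ring

lemma main_all (m k k' : ℕ) : PI (RzP k m * RzP k' m * X) =
    if k = k' then 1/(2*((m+2*k:ℕ):ℝ)+2) else 0 := by
  rcases le_total k k' with h|h
  · exact main_le m k k' h
  · rw [show RzP k m * RzP k' m * X = RzP k' m * RzP k m * X from by ring, main_le m k' k h]
    by_cases hk : k = k'
    · subst hk
      simp
    · rw [if_neg hk, if_neg (fun hh => hk hh.symm)]

theorem zernike_orthogonality (n n' m : ℕ) (hmn : m ≤ n) (hmn' : m ≤ n')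
    (heven : Even (n - m)) (heven' : Even (n' - m)) :
    ∫ r in (0:ℝ)..1, Rz n m r * Rz n' m r * r =
      if n = n' then 1 / (2 * (n : ℝ) + 2) else 0 := by
  obtain ⟨k, hk⟩ : ∃ k, n = m + 2*k := by
    obtain ⟨t, ht⟩ := heven
    exact ⟨t, by omega⟩
  obtain ⟨k', hk'⟩ : ∃ k', n' = m + 2*k' := by
    obtain ⟨t, ht⟩ := heven'
    exact ⟨t, by omega⟩
  subst hk
  subst hk'
  have hfun : ∀ r : ℝ, Rz (m+2*k) m r * Rz (m+2*k') m r * r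
      = (RzP k m * RzP k' m * X).eval r := by
    intro r
    rw [Rz_eval, Rz_eval]
    simp [eval_mul]
  have hPI : (∫ r in (0:ℝ)..1, Rz (m+2*k) m r * Rz (m+2*k') m r * r)
      = PI (RzP k m * RzP k' m * X) := by
    unfold PI
    exact intervalIntegral.integral_congr (fun r _ => hfun r)
  rw [hPI, main_all]
  rcases eq_or_ne k k' with hkk|hkk
  · subst hkk
    simp
  · rw [if_neg hkk, if_neg (show ¬(m+2*k = m+2*k') from by omega)]
end

section
/- For admissible (n,m) with m \le n - 2, the integration recurrence \int_{r_0}^{r} [R_n^m(\rho) + R_n^{m+2}(\rho)]\,d\rho = \frac{1}{n+1}\left[ (R_{n+1}^{m+1}(r) - R_{n-1}^{m+1}(r)) - (R_{n+1}^{m+1}(r_0) - R_{n-1}^{m+1}(r_0)) \right] holds for all real r_0, r. -/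
open scoped Real BigOperators

lemma Rz_eq (n m p : ℕ) (h : n = m + 2 * p) (r : ℝ) :
    Rz n m r = ∑ ℓ ∈ Finset.range (p + 1),
      (-1 : ℝ) ^ ℓ * (Nat.factorial (n - ℓ) : ℝ) /
        ((Nat.factorial ℓ : ℝ) * (Nat.factorial (p - ℓ) : ℝ) *
          (Nat.factorial (m + p - ℓ) : ℝ)) * r ^ (n - 2 * ℓ) := by
  subst h
  unfold Rz
  have h1 : (m + 2 * p - m) / 2 = p := by omega
  have h2 : (m + 2 * p + m) / 2 = m + p := by omega
  simp only [h1, h2]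

lemma key (m q : ℕ) (x : ℝ) :
    (∑ ℓ ∈ Finset.range (q + 1 + 1),
        (-1 : ℝ) ^ ℓ * (Nat.factorial (m + 2 * q + 2 + 1 - ℓ) : ℝ) /
          ((Nat.factorial ℓ : ℝ) * (Nat.factorial (q + 1 - ℓ) : ℝ) *
            (Nat.factorial (m + 1 + (q + 1) - ℓ) : ℝ)) *
          (((m + 2 * q + 2 + 1 - 2 * ℓ : ℕ) : ℝ) * x ^ (m + 2 * q + 2 + 1 - 2 * ℓ - 1)))
    - (∑ ℓ ∈ Finset.range (q + 1),
        (-1 : ℝ) ^ ℓ * (Nat.factorial (m + 2 * q + 1 - ℓ) : ℝ) /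
          ((Nat.factorial ℓ : ℝ) * (Nat.factorial (q - ℓ) : ℝ) *
            (Nat.factorial (m + 1 + q - ℓ) : ℝ)) *
          (((m + 2 * q + 1 - 2 * ℓ : ℕ) : ℝ) * x ^ (m + 2 * q + 1 - 2 * ℓ - 1)))
    = (((m + 2 * q + 2 : ℕ) : ℝ) + 1) *
      ((∑ ℓ ∈ Finset.range (q + 1 + 1),
        (-1 : ℝ) ^ ℓ * (Nat.factorial (m + 2 * q + 2 - ℓ) : ℝ) /
          ((Nat.factorial ℓ : ℝ) * (Nat.factorial (q + 1 - ℓ) : ℝ) *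
            (Nat.factorial (m + (q + 1) - ℓ) : ℝ)) * x ^ (m + 2 * q + 2 - 2 * ℓ))
      + (∑ ℓ ∈ Finset.range (q + 1),
        (-1 : ℝ) ^ ℓ * (Nat.factorial (m + 2 * q + 2 - ℓ) : ℝ) /
          ((Nat.factorial ℓ : ℝ) * (Nat.factorial (q - ℓ) : ℝ) *
            (Nat.factorial (m + 2 + q - ℓ) : ℝ)) * x ^ (m + 2 * q + 2 - 2 * ℓ))) := by
  have hG : (∑ j ∈ Finset.range (q + 1 + 1),
      (if j = 0 then (0 : ℝ) else
        (-1 : ℝ) ^ (j - 1) * (Nat.factorial (m + 2 * q + 1 - (j - 1)) : ℝ) /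
          ((Nat.factorial (j - 1) : ℝ) * (Nat.factorial (q - (j - 1)) : ℝ) *
            (Nat.factorial (m + 1 + q - (j - 1)) : ℝ)) *
          (((m + 2 * q + 1 - 2 * (j - 1) : ℕ) : ℝ) * x ^ (m + 2 * q + 1 - 2 * (j - 1) - 1)))) =
      ∑ ℓ ∈ Finset.range (q + 1),
        (-1 : ℝ) ^ ℓ * (Nat.factorial (m + 2 * q + 1 - ℓ) : ℝ) /
          ((Nat.factorial ℓ : ℝ) * (Nat.factorial (q - ℓ) : ℝ) *
            (Nat.factorial (m + 1 + q - ℓ) : ℝ)) *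
          (((m + 2 * q + 1 - 2 * ℓ : ℕ) : ℝ) * x ^ (m + 2 * q + 1 - 2 * ℓ - 1)) := by
    rw [Finset.sum_range_succ']
    simp
  have hV : (∑ j ∈ Finset.range (q + 1 + 1),
      (if j = q + 1 then (0 : ℝ) else
        (-1 : ℝ) ^ j * (Nat.factorial (m + 2 * q + 2 - j) : ℝ) /
          ((Nat.factorial j : ℝ) * (Nat.factorial (q - j) : ℝ) *
            (Nat.factorial (m + 2 + q - j) : ℝ)) * x ^ (m + 2 * q + 2 - 2 * j))) =
      ∑ ℓ ∈ Finset.range (q + 1),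
        (-1 : ℝ) ^ ℓ * (Nat.factorial (m + 2 * q + 2 - ℓ) : ℝ) /
          ((Nat.factorial ℓ : ℝ) * (Nat.factorial (q - ℓ) : ℝ) *
            (Nat.factorial (m + 2 + q - ℓ) : ℝ)) * x ^ (m + 2 * q + 2 - 2 * ℓ) := by
    rw [Finset.sum_range_succ, if_pos rfl, add_zero]
    exact Finset.sum_congr rfl fun i hi =>
      if_neg (by have := Finset.mem_range.mp hi; omega)
  rw [← hG, ← hV, ← Finset.sum_sub_distrib, mul_add, Finset.mul_sum, Finset.mul_sum,
    ← Finset.sum_add_distrib]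
  refine Finset.sum_congr rfl fun j hj => ?_
  have hj' : j ≤ q + 1 := by have := Finset.mem_range.mp hj; omega
  rcases Nat.eq_zero_or_pos j with rfl | hj0
  · rw [if_pos rfl, if_neg (show ¬(0 = q + 1) by omega)]
    simp only [Nat.sub_zero, Nat.mul_zero, mul_zero, sub_zero, pow_zero, Nat.factorial_zero,
      Nat.cast_one, one_mul,
      show m + 2 * q + 2 + 1 - 1 = m + 2 * q + 2 from by omega,
      show m + 1 + (q + 1) = (m + q + 1) + 1 from by omega,
      show m + (q + 1) = m + q + 1 from by omega,
      show m + 2 + q = (m + q + 1) + 1 from by omega,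
      Nat.factorial_succ]
    have h1 : (Nat.factorial q : ℝ) ≠ 0 := Nat.cast_ne_zero.mpr (Nat.factorial_ne_zero _)
    have h2 : (Nat.factorial (m + q) : ℝ) ≠ 0 := Nat.cast_ne_zero.mpr (Nat.factorial_ne_zero _)
    have h3 : ((q : ℝ) + 1) ≠ 0 := by positivity
    have h4 : ((m : ℝ) + (q : ℝ) + 1) ≠ 0 := by positivity
    push_cast
    field_simp
    ring
  · rcases eq_or_lt_of_le hj' with rfl | hlt
    · rw [if_neg (Nat.succ_ne_zero q), if_pos rfl, mul_zero, add_zero]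
      simp only [Nat.add_sub_cancel,
        show m + 2 * q + 2 + 1 - (q + 1) = (m + q + 1) + 1 from by omega,
        show q + 1 - (q + 1) = 0 from by omega,
        show m + 1 + (q + 1) - (q + 1) = m + 1 from by omega,
        show m + 2 * q + 2 + 1 - 2 * (q + 1) = m + 1 from by omega,
        show m + 2 * q + 2 + 1 - 2 * (q + 1) - 1 = m from by omega,
        show m + 1 - 1 = m from by omega,
        show m + 2 * q + 1 - q = (m + q) + 1 from by omega,
        show q - q = 0 from by omega,
        show m + 1 + q - q = m + 1 from by omega,
        show m + 2 * q + 1 - 2 * q = m + 1 from by omega,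
        show m + 2 * q + 1 - 2 * q - 1 = m from by omega,
        show m + 2 * q + 2 - (q + 1) = (m + q) + 1 from by omega,
        show m + (q + 1) - (q + 1) = m from by omega,
        show m + 2 * q + 2 - 2 * (q + 1) = m from by omega,
        Nat.factorial_zero, Nat.cast_one, one_mul, mul_one,
        Nat.factorial_succ, pow_succ]
      have h1 : (Nat.factorial q : ℝ) ≠ 0 := Nat.cast_ne_zero.mpr (Nat.factorial_ne_zero _)
      have h2 : (Nat.factorial m : ℝ) ≠ 0 := Nat.cast_ne_zero.mpr (Nat.factorial_ne_zero _)
      have h3 : (Nat.factorial (m + q) : ℝ) ≠ 0 := Nat.cast_ne_zero.mpr (Nat.factorial_ne_zero _)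
      have h4 : ((q : ℝ) + 1) ≠ 0 := by positivity
      have h5 : ((m : ℝ) + 1) ≠ 0 := by positivity
      push_cast
      field_simp
      ring
    · obtain ⟨i, rfl⟩ : ∃ i, j = i + 1 := ⟨j - 1, by omega⟩
      obtain ⟨s, rfl⟩ : ∃ s, q = i + 1 + s := ⟨q - (i + 1), by omega⟩
      rw [if_neg (Nat.succ_ne_zero i), if_neg (show ¬i + 1 = i + 1 + s + 1 by omega)]
      simp only [Nat.add_sub_cancel,
        show m + 2 * (i + 1 + s) + 2 + 1 - (i + 1) = (m + i + 2 * s + 3) + 1 from by omega,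
        show i + 1 + s + 1 - (i + 1) = s + 1 from by omega,
        show m + 1 + (i + 1 + s + 1) - (i + 1) = (m + s + 1) + 1 from by omega,
        show m + 2 * (i + 1 + s) + 2 + 1 - 2 * (i + 1) = m + 2 * s + 3 from by omega,
        show m + 2 * (i + 1 + s) + 2 + 1 - 2 * (i + 1) - 1 = m + 2 * s + 2 from by omega,
        show m + 2 * s + 3 - 1 = m + 2 * s + 2 from by omega,
        show m + 2 * (i + 1 + s) + 1 - i = m + i + 2 * s + 3 from by omega,
        show i + 1 + s - i = s + 1 from by omega,
        show m + 1 + (i + 1 + s) - i = (m + s + 1) + 1 from by omega,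
        show m + 2 * (i + 1 + s) + 1 - 2 * i = m + 2 * s + 3 from by omega,
        show m + 2 * (i + 1 + s) + 1 - 2 * i - 1 = m + 2 * s + 2 from by omega,
        show m + 2 * (i + 1 + s) + 2 - (i + 1) = m + i + 2 * s + 3 from by omega,
        show m + (i + 1 + s + 1) - (i + 1) = m + s + 1 from by omega,
        show m + 2 * (i + 1 + s) + 2 - 2 * (i + 1) = m + 2 * s + 2 from by omega,
        show i + 1 + s - (i + 1) = s from by omega,
        show m + 2 + (i + 1 + s) - (i + 1) = (m + s + 1) + 1 from by omega,
        Nat.factorial_succ, pow_succ]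
      have h1 : (Nat.factorial i : ℝ) ≠ 0 := Nat.cast_ne_zero.mpr (Nat.factorial_ne_zero _)
      have h2 : (Nat.factorial s : ℝ) ≠ 0 := Nat.cast_ne_zero.mpr (Nat.factorial_ne_zero _)
      have h3 : (Nat.factorial (m + s) : ℝ) ≠ 0 := Nat.cast_ne_zero.mpr (Nat.factorial_ne_zero _)
      have h4 : (Nat.factorial (m + i + 2 * s + 3) : ℝ) ≠ 0 :=
        Nat.cast_ne_zero.mpr (Nat.factorial_ne_zero _)
      have h5 : ((i : ℝ) + 1) ≠ 0 := by positivity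
      have h6 : ((s : ℝ) + 1) ≠ 0 := by positivity
      have h7 : ((m : ℝ) + (s : ℝ) + 1) ≠ 0 := by positivity
      push_cast
      field_simp
      ring

theorem zernike_integral_recurrence (n m : ℕ) (hmn : m + 2 ≤ n) (heven : Even (n - m))
    (r₀ r : ℝ) :
    ∫ ρ in r₀..r, (Rz n m ρ + Rz n (m + 2) ρ) =
      (1 / ((n : ℝ) + 1)) *
        ((Rz (n + 1) (m + 1) r - Rz (n - 1) (m + 1) r) -
          (Rz (n + 1) (m + 1) r₀ - Rz (n - 1) (m + 1) r₀)) := by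
  obtain ⟨t, ht⟩ := heven
  obtain ⟨q, rfl⟩ : ∃ q, n = m + 2 * q + 2 := ⟨(n - m - 2) / 2, by omega⟩
  rw [show m + 2 * q + 2 - 1 = m + 2 * q + 1 from by omega]
  have hA : ∀ r : ℝ, Rz (m + 2 * q + 2 + 1) (m + 1) r = ∑ ℓ ∈ Finset.range (q + 1 + 1),
      (-1 : ℝ) ^ ℓ * (Nat.factorial (m + 2 * q + 2 + 1 - ℓ) : ℝ) /
        ((Nat.factorial ℓ : ℝ) * (Nat.factorial (q + 1 - ℓ) : ℝ) *
          (Nat.factorial (m + 1 + (q + 1) - ℓ) : ℝ)) * r ^ (m + 2 * q + 2 + 1 - 2 * ℓ) :=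
    fun r => Rz_eq _ _ _ (by omega) r
  have hB : ∀ r : ℝ, Rz (m + 2 * q + 1) (m + 1) r = ∑ ℓ ∈ Finset.range (q + 1),
      (-1 : ℝ) ^ ℓ * (Nat.factorial (m + 2 * q + 1 - ℓ) : ℝ) /
        ((Nat.factorial ℓ : ℝ) * (Nat.factorial (q - ℓ) : ℝ) *
          (Nat.factorial (m + 1 + q - ℓ) : ℝ)) * r ^ (m + 2 * q + 1 - 2 * ℓ) :=
    fun r => Rz_eq _ _ _ (by omega) r
  have ha : ∀ r : ℝ, Rz (m + 2 * q + 2) m r = ∑ ℓ ∈ Finset.range (q + 1 + 1),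
      (-1 : ℝ) ^ ℓ * (Nat.factorial (m + 2 * q + 2 - ℓ) : ℝ) /
        ((Nat.factorial ℓ : ℝ) * (Nat.factorial (q + 1 - ℓ) : ℝ) *
          (Nat.factorial (m + (q + 1) - ℓ) : ℝ)) * r ^ (m + 2 * q + 2 - 2 * ℓ) :=
    fun r => Rz_eq _ _ _ (by omega) r
  have hb : ∀ r : ℝ, Rz (m + 2 * q + 2) (m + 2) r = ∑ ℓ ∈ Finset.range (q + 1),
      (-1 : ℝ) ^ ℓ * (Nat.factorial (m + 2 * q + 2 - ℓ) : ℝ) /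
        ((Nat.factorial ℓ : ℝ) * (Nat.factorial (q - ℓ) : ℝ) *
          (Nat.factorial (m + 2 + q - ℓ) : ℝ)) * r ^ (m + 2 * q + 2 - 2 * ℓ) :=
    fun r => Rz_eq _ _ _ (by omega) r
  have hc : ((m + 2 * q + 2 : ℕ) : ℝ) + 1 ≠ 0 := by positivity
  have hderiv : ∀ x : ℝ, HasDerivAt
      (fun r : ℝ => 1 / (((m + 2 * q + 2 : ℕ) : ℝ) + 1) *
        (Rz (m + 2 * q + 2 + 1) (m + 1) r - Rz (m + 2 * q + 1) (m + 1) r))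
      (Rz (m + 2 * q + 2) m x + Rz (m + 2 * q + 2) (m + 2) x) x := by
    intro x
    rw [show Rz (m + 2 * q + 2) m x + Rz (m + 2 * q + 2) (m + 2) x =
        1 / (((m + 2 * q + 2 : ℕ) : ℝ) + 1) * ((((m + 2 * q + 2 : ℕ) : ℝ) + 1) *
          (Rz (m + 2 * q + 2) m x + Rz (m + 2 * q + 2) (m + 2) x)) from by
      rw [one_div, inv_mul_cancel_left₀ hc]]
    simp only [hA, hB, ha, hb]
    rw [← key m q x]
    exact HasDerivAt.const_mul _
      ((HasDerivAt.fun_sum fun ℓ _ => (hasDerivAt_pow _ x).const_mul _).sub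
        (HasDerivAt.fun_sum fun ℓ _ => (hasDerivAt_pow _ x).const_mul _))
  have hcont : Continuous fun ρ : ℝ =>
      Rz (m + 2 * q + 2) m ρ + Rz (m + 2 * q + 2) (m + 2) ρ := by
    apply Continuous.add <;>
    · unfold Rz
      exact continuous_finset_sum _ fun i _ => continuous_const.mul (continuous_pow _)
  rw [intervalIntegral.integral_eq_sub_of_hasDerivAt (fun x _ => hderiv x)
    (hcont.intervalIntegrable r₀ r)]
  ring
end

section
/- For every admissible pair (n,m) and every r in [0,1], |R_n^m(r)| \le 1. -/
open scoped Real BigOperators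

open Polynomial Finset

noncomputable def Bf (n : ℕ) (p q : ℝ[X]) : ℝ :=
  ∑ i ∈ range (n+1), (Nat.factorial i : ℝ) * (Nat.factorial (n-i)) * p.coeff i * q.coeff i

lemma linpow_eq (α β : ℝ) (n : ℕ) :
    (C α * X + C β)^n = ∑ k ∈ range (n+1), C (α^k * β^(n-k) * (n.choose k)) * X^k := by
  rw [add_pow]
  refine Finset.sum_congr rfl fun k hk => ?_
  simp only [mul_pow, ← C_pow]
  rw [← C_eq_natCast, C_mul, C_mul]
  ring

lemma coeff_linpow (α β : ℝ) (n i : ℕ) (h : i ≤ n) :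
    ((C α * X + C β)^n).coeff i = n.choose i * α^i * β^(n-i) := by
  rw [linpow_eq, finset_sum_coeff]
  simp only [coeff_C_mul, coeff_X_pow]
  rw [Finset.sum_eq_single i]
  · simp [mul_comm, mul_assoc, mul_left_comm]
  · intro k _ hk; simp [Ne.symm hk]
  · intro h2; exact absurd (mem_range.2 (Nat.lt_succ_of_le h)) h2

lemma Bf_linpow (α β γ δ : ℝ) (n : ℕ) :
    Bf n ((C α * X + C β)^n) ((C γ * X + C δ)^n) = (Nat.factorial n) * (α*γ + β*δ)^n := by
  unfold Bf
  rw [add_pow (α*γ) (β*δ) n, Finset.mul_sum]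
  refine Finset.sum_congr rfl fun i hi => ?_
  have hi' : i ≤ n := Nat.lt_succ_iff.1 (mem_range.1 hi)
  rw [coeff_linpow _ _ _ _ hi', coeff_linpow _ _ _ _ hi']
  have key : (i.factorial : ℝ) * (n-i).factorial * (n.choose i) = n.factorial := by
    rw_mod_cast [← Nat.choose_mul_factorial_mul_factorial hi']; ring
  have : (n.factorial : ℝ) = (i.factorial : ℝ) * (n-i).factorial * (n.choose i) := key.symm
  rw [this]
  rw [mul_pow, mul_pow]
  push_cast
  ring

noncomputable def Lp (c s : ℝ) : ℝ[X] := C c * X + C s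
noncomputable def Mp (c s : ℝ) : ℝ[X] := C (-s) * X + C c
noncomputable def Hq (c s : ℝ) (n k : ℕ) : ℝ[X] := (Mp c s)^k * (Lp c s)^(n-k)

lemma shift_eq (c s v : ℝ) : C (c - v*s) * X + C (s + v*c) = Lp c s + C v * Mp c s := by
  simp only [Lp, Mp, map_sub, map_add, map_mul, map_neg]
  ring

lemma shift_pow (c s v : ℝ) (n : ℕ) :
    (C (c - v*s) * X + C (s + v*c))^n
      = ∑ k ∈ range (n+1), C (v^k * (n.choose k)) * Hq c s n k := by
  rw [shift_eq, add_comm (Lp c s), add_pow]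
  refine Finset.sum_congr rfl fun k hk => ?_
  rw [mul_pow, ← C_pow, ← C_eq_natCast, C_mul]
  unfold Hq
  ring

lemma Bf_sum_sum (n K : ℕ) (f g : ℕ → ℝ) (P Q : ℕ → ℝ[X]) :
    Bf n (∑ k ∈ range K, C (f k) * P k) (∑ l ∈ range K, C (g l) * Q l)
      = ∑ l ∈ range K, ∑ k ∈ range K, f k * g l * Bf n (P k) (Q l) := by
  unfold Bf
  simp only [finset_sum_coeff, coeff_C_mul]
  have L : ∀ i ∈ range (n+1), (i.factorial : ℝ) * (Nat.factorial (n-i)) *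
        (∑ k ∈ range K, f k * (P k).coeff i) * (∑ l ∈ range K, g l * (Q l).coeff i)
      = ∑ l ∈ range K, ∑ k ∈ range K,
          (i.factorial : ℝ) * (Nat.factorial (n-i)) * (f k * (P k).coeff i) *
            (g l * (Q l).coeff i) := by
    intro i _
    rw [Finset.mul_sum]
    refine Finset.sum_congr rfl fun l _ => ?_
    rw [Finset.mul_sum, Finset.sum_mul]
  rw [Finset.sum_congr rfl L, Finset.sum_comm]
  refine Finset.sum_congr rfl fun l _ => ?_
  rw [Finset.sum_comm]
  refine Finset.sum_congr rfl fun k _ => ?_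
  rw [Finset.mul_sum]
  refine Finset.sum_congr rfl fun i _ => ?_
  ring

lemma eval_id (c s : ℝ) (n : ℕ) (t u : ℝ) :
    ∑ k ∈ range (n+1), ∑ l ∈ range (n+1),
      ((n.choose k : ℝ) * (n.choose l) * Bf n (Hq c s n k) (Hq c s n l)) * t^k * u^l
      = n.factorial * ((c^2+s^2)*(1+t*u))^n := by
  have e1 := Bf_linpow (c - t*s) (s + t*c) (c - u*s) (s + u*c) n
  rw [shift_pow, shift_pow, Bf_sum_sum] at e1
  have e2 : (c - t*s)*(c - u*s) + (s + t*c)*(s + u*c) = (c^2+s^2)*(1+t*u) := by ring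
  rw [e2] at e1
  rw [← e1, Finset.sum_comm]
  refine Finset.sum_congr rfl fun l _ => Finset.sum_congr rfl fun k _ => ?_
  ring

lemma vanish (K : ℕ) (f : ℕ → ℝ) (h : ∀ t : ℝ, ∑ k ∈ range K, f k * t^k = 0) :
    ∀ k < K, f k = 0 := by
  have hp : (∑ k ∈ range K, C (f k) * X^k : ℝ[X]) = 0 := by
    apply Polynomial.funext; intro t
    rw [eval_zero, eval_finset_sum]
    simpa using h t
  intro k hk
  have h2 := congrArg (fun p => coeff p k) hp
  simp only [finset_sum_coeff, coeff_C_mul, coeff_X_pow, coeff_zero] at h2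
  rw [Finset.sum_eq_single k] at h2
  · simpa using h2
  · intro k' _ hk'; simp [Ne.symm hk']
  · intro hh; exact absurd (mem_range.2 hk) hh

lemma vanish2 (K : ℕ) (M : ℕ → ℕ → ℝ)
    (h : ∀ t u : ℝ, ∑ k ∈ range K, ∑ l ∈ range K, M k l * t^k * u^l = 0) :
    ∀ k < K, ∀ l < K, M k l = 0 := by
  have h1 : ∀ u : ℝ, ∀ k < K, (∑ l ∈ range K, M k l * u^l) = 0 := by
    intro u
    apply vanish
    intro t
    rw [← h t u]
    refine Finset.sum_congr rfl fun k _ => ?_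
    rw [Finset.sum_mul]
    refine Finset.sum_congr rfl fun l _ => ?_
    ring
  intro k hk l hl
  exact vanish K (fun l => M k l) (fun u => h1 u k hk) l hl

lemma diag_expand (n : ℕ) (t u : ℝ) :
    (Nat.factorial n : ℝ) * ((1:ℝ)+t*u)^n
      = ∑ k ∈ range (n+1), ∑ l ∈ range (n+1),
          (if k = l then (Nat.factorial n : ℝ) * (n.choose k) else 0) * t^k * u^l := by
  have h1 : ∀ k ∈ range (n+1), ∑ l ∈ range (n+1),
      (if k = l then (Nat.factorial n : ℝ) * (n.choose k) else 0) * t^k * u^l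
      = (Nat.factorial n : ℝ) * (n.choose k) * t^k * u^k := by
    intro k hk
    rw [Finset.sum_eq_single k]
    · simp
    · intro l _ hl; simp [Ne.symm hl]
    · intro h; exact absurd hk h
  rw [Finset.sum_congr rfl h1, add_comm (1:ℝ), add_pow, Finset.mul_sum]
  refine Finset.sum_congr rfl fun k _ => ?_
  rw [mul_pow]
  push_cast
  ring

lemma Bf_diag (c s : ℝ) (hcs : c^2+s^2 = 1) (n b : ℕ) (hb : b ≤ n) :
    Bf n (Hq c s n b) (Hq c s n b)
      = (Nat.factorial b : ℝ) * (Nat.factorial (n-b)) := by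
  have hv := vanish2 (n+1)
    (fun k l => (n.choose k : ℝ) * (n.choose l) * Bf n (Hq c s n k) (Hq c s n l)
      - (if k = l then (Nat.factorial n : ℝ) * (n.choose k) else 0)) ?_ b (by omega) b (by omega)
  · simp only [if_pos rfl, if_true, sub_eq_zero] at hv
    have hch : (0:ℝ) < (n.choose b : ℝ) := by
      exact_mod_cast Nat.choose_pos hb
    have hfac : (n.choose b : ℝ) * ((Nat.factorial b : ℝ) * (Nat.factorial (n-b)))
        = Nat.factorial n := by
      rw_mod_cast [← Nat.choose_mul_factorial_mul_factorial hb]; push_cast; ring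
    have h3 : ((n.choose b:ℝ) * (n.choose b)) * Bf n (Hq c s n b) (Hq c s n b)
        = ((n.choose b:ℝ)*(n.choose b)) * ((Nat.factorial b : ℝ) * (Nat.factorial (n-b))) := by
      rw [hv, mul_assoc, hfac]; ring
    exact mul_left_cancel₀ (by positivity) h3
  · intro t u
    have e := eval_id c s n t u
    rw [hcs, one_mul] at e
    have e2 := diag_expand n t u
    simp only [sub_mul, Finset.sum_sub_distrib]
    rw [e, e2]
    ring

lemma coeff_linpow_zero (α β : ℝ) (n i : ℕ) (h : n < i) :
    ((C α * X + C β)^n).coeff i = 0 := by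
  rw [linpow_eq, finset_sum_coeff]
  apply Finset.sum_eq_zero
  intro k hk
  have hki : i ≠ k := by have := mem_range.1 hk; omega
  simp only [coeff_C_mul, coeff_X_pow, if_neg hki, mul_zero]

lemma coeff_Hq (c s : ℝ) (a b : ℕ) (hba : b ≤ a) :
    (Hq c s (a+b) b).coeff a
      = ∑ q ∈ range (b+1),
          (-1:ℝ)^q * ((a.choose q : ℝ) * (b.choose q)) * c^(a+b-2*q) * s^(2*q) := by
  unfold Hq Mp Lp
  have hnb : a + b - b = a := by omega
  rw [hnb, coeff_mul, Finset.Nat.sum_antidiagonal_eq_sum_range_succ_mk]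
  have hsub : range (b+1) ⊆ range (a+1) := by
    intro x hx; simp only [mem_range] at *; omega
  rw [← Finset.sum_subset hsub ?_]
  · refine Finset.sum_congr rfl fun q hq => ?_
    have hq' : q ≤ b := by have := mem_range.1 hq; omega
    rw [coeff_linpow _ _ _ _ hq', coeff_linpow _ _ _ _ (by omega : a - q ≤ a)]
    rw [Nat.choose_symm (by omega : q ≤ a)]
    have h1 : a - (a - q) = q := by omega
    have h2 : a + b - 2*q = (b - q) + (a - q) := by omega
    rw [h1, h2, pow_add, neg_pow]
    have h3 : 2*q = q + q := by omega
    rw [h3, pow_add]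
    ring
  · intro q hq hnq
    have hbq : b < q := by
      have := mem_range.1 hq
      simp only [mem_range] at hnq; omega
    rw [coeff_linpow_zero _ _ _ _ hbq, zero_mul]

lemma key_bound (c s : ℝ) (hcs : c^2+s^2 = 1) (a b : ℕ) (hba : b ≤ a) :
    |∑ q ∈ range (b+1),
        (-1:ℝ)^q * ((a.choose q : ℝ) * (b.choose q)) * c^(a+b-2*q) * s^(2*q)| ≤ 1 := by
  rw [← coeff_Hq c s a b hba]
  have hd := Bf_diag c s hcs (a+b) b (by omega)
  have hab1 : a + b - b = a := by omega
  rw [hab1] at hd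
  have hterm : (a.factorial : ℝ) * ((a+b-a).factorial) *
      (Hq c s (a+b) b).coeff a * (Hq c s (a+b) b).coeff a ≤ Bf (a+b) (Hq c s (a+b) b) (Hq c s (a+b) b) := by
    unfold Bf
    refine Finset.single_le_sum (f := fun i => (i.factorial : ℝ) * ((a+b-i).factorial) *
      (Hq c s (a+b) b).coeff i * (Hq c s (a+b) b).coeff i) ?_ (mem_range.2 (by omega))
    intro i _
    rw [mul_assoc]
    exact mul_nonneg (by positivity) (mul_self_nonneg _)
  have hab2 : a + b - a = b := by omega
  rw [hab2, hd] at hterm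
  have hfa : (0:ℝ) < (a.factorial : ℝ) * (b.factorial : ℝ) := by positivity
  rw [abs_le_one_iff_mul_self_le_one]
  nlinarith [hterm]

lemma natid (a b l : ℕ) (hba : b ≤ a) (hl : l ≤ b) :
    ∑ q ∈ range (b+1), a.choose q * b.choose q * q.choose l
      = a.choose l * (a+b-l).choose (b-l) := by
  have hsub : Finset.Ico l (b+1) ⊆ range (b+1) := by
    intro x hx; simp only [Finset.mem_Ico, mem_range] at *; omega
  rw [← Finset.sum_subset hsub (by
    intro q hq hnq
    simp only [Finset.mem_Ico, mem_range] at hq hnq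
    have : q < l := by omega
    rw [Nat.choose_eq_zero_of_lt this, mul_zero])]
  rw [Finset.sum_Ico_eq_sum_range]
  have hstep : ∀ j ∈ range (b+1-l), a.choose (l+j) * b.choose (l+j) * (l+j).choose l
      = a.choose l * ((a-l).choose j * b.choose (l+j)) := by
    intro j hj
    have hj' : j ≤ b - l := by have := mem_range.1 hj; omega
    have hm := Nat.choose_mul (n := a) (show l ≤ l + j by omega)
    rw [show l + j - l = j by omega] at hm
    calc a.choose (l+j) * b.choose (l+j) * (l+j).choose l
        = (a.choose (l+j) * (l+j).choose l) * b.choose (l+j) := by ring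
      _ = (a.choose l * (a-l).choose j) * b.choose (l+j) := by rw [hm]
      _ = a.choose l * ((a-l).choose j * b.choose (l+j)) := by ring
  rw [Finset.sum_congr rfl hstep, ← Finset.mul_sum]
  congr 1
  have hv := Nat.add_choose_eq (a-l) b (b-l)
  rw [Finset.Nat.sum_antidiagonal_eq_sum_range_succ_mk] at hv
  rw [show a + b - l = (a-l) + b by omega, hv,
    show (b - l).succ = b + 1 - l by omega]
  dsimp only
  refine Finset.sum_congr rfl fun j hj => ?_
  have hj' : j ≤ b - l := by have := mem_range.1 hj; omega
  congr 1
  rw [show b - l - j = b - (l+j) by omega, Nat.choose_symm (by omega)]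

lemma natid2 (a b l : ℕ) (hba : b ≤ a) (hl : l ≤ b) :
    (∑ q ∈ range (b+1), a.choose q * b.choose q * q.choose l)
        * (l.factorial * (b-l).factorial * (a-l).factorial)
      = (a+b-l).factorial := by
  rw [natid a b l hba hl]
  have h1 : a.choose l * l.factorial * (a-l).factorial = a.factorial :=
    Nat.choose_mul_factorial_mul_factorial (by omega)
  have h2 : (a+b-l).choose (b-l) * (b-l).factorial * a.factorial = (a+b-l).factorial := by
    have := Nat.choose_mul_factorial_mul_factorial (show b-l ≤ a+b-l by omega)
    rwa [show a+b-l-(b-l) = a by omega] at this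
  calc a.choose l * (a+b-l).choose (b-l) * (l.factorial * (b-l).factorial * (a-l).factorial)
      = ((a+b-l).choose (b-l) * (b-l).factorial) * (a.choose l * l.factorial * (a-l).factorial) := by
        ring
    _ = ((a+b-l).choose (b-l) * (b-l).factorial) * a.factorial := by rw [h1]
    _ = (a+b-l).factorial := by rw [mul_assoc, ← mul_assoc, h2]

lemma coeffid (a b l : ℕ) (hba : b ≤ a) (hl : l ≤ b) :
    ((a+b-l).factorial : ℝ) /
        ((l.factorial : ℝ) * ((b-l).factorial : ℝ) * ((a-l).factorial : ℝ))
      = ∑ q ∈ range (b+1), (a.choose q : ℝ) * (b.choose q) * (q.choose l) := by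
  rw [div_eq_iff (by positivity)]
  have h := natid2 a b l hba hl
  have h2 : (((∑ q ∈ range (b+1), a.choose q * b.choose q * q.choose l)
      * (l.factorial * (b-l).factorial * (a-l).factorial) : ℕ) : ℝ)
      = (((a+b-l).factorial : ℕ) : ℝ) := congrArg (fun x : ℕ => (x : ℝ)) h
  push_cast at h2
  rw [← h2]

lemma idA (a b : ℕ) (hba : b ≤ a) (r : ℝ) :
    ∑ q ∈ range (b+1),
        (-1:ℝ)^q * ((a.choose q : ℝ) * (b.choose q)) * r^(a+b-2*q) * (1-r^2)^q
      = ∑ l ∈ range (b+1),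
          (-1:ℝ)^l * ((a+b-l).factorial : ℝ) /
            ((l.factorial : ℝ) * ((b-l).factorial : ℝ) * ((a-l).factorial : ℝ)) *
            r^(a+b-2*l) := by
  have step1 : ∀ q ∈ range (b+1),
      (-1:ℝ)^q * ((a.choose q : ℝ) * (b.choose q)) * r^(a+b-2*q) * (1-r^2)^q
      = ∑ l ∈ range (b+1),
          (-1:ℝ)^l * ((a.choose q : ℝ) * (b.choose q) * (q.choose l)) * r^(a+b-2*l) := by
    intro q hq
    have hq' : q ≤ b := by have := mem_range.1 hq; omega
    have hsub : range (q+1) ⊆ range (b+1) := by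
      intro x hx; simp only [mem_range] at *; omega
    rw [← Finset.sum_subset hsub (by
      intro l hl hnl
      simp only [mem_range] at hl hnl
      rw [Nat.choose_eq_zero_of_lt (show q < l by omega)]; simp)]
    conv_rhs => rw [← Finset.sum_range_reflect]
    have e1 : (1-r^2 : ℝ) = (-(r^2)) + 1 := by ring
    rw [e1, add_pow, Finset.mul_sum]
    refine Finset.sum_congr rfl fun t ht => ?_
    have ht' : t ≤ q := by have := mem_range.1 ht; omega
    rw [show q + 1 - 1 - t = q - t by omega, Nat.choose_symm ht']
    have hsign : (-1:ℝ)^(q-t) = (-1)^q * (-1)^t := by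
      have h2t : (-1:ℝ)^(t+t) = 1 := Even.neg_one_pow ⟨t, rfl⟩
      calc (-1:ℝ)^(q-t) = (-1)^(q-t) * (-1)^(t+t) := by rw [h2t, mul_one]
        _ = (-1)^((q-t)+(t+t)) := (pow_add _ _ _).symm
        _ = (-1)^(q+t) := by rw [show (q-t)+(t+t) = q+t by omega]
        _ = (-1)^q * (-1)^t := pow_add _ _ _
    rw [show a+b-2*(q-t) = (a+b-2*q) + 2*t by omega, pow_add r, hsign]
    rw [neg_pow (r^2), ← pow_mul]
    ring
  rw [Finset.sum_congr rfl step1, Finset.sum_comm]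
  refine Finset.sum_congr rfl fun l hl => ?_
  have hl' : l ≤ b := by have := mem_range.1 hl; omega
  rw [mul_div_assoc, coeffid a b l hba hl', Finset.mul_sum, Finset.sum_mul]

theorem zernike_bounded (n m : ℕ) (hmn : m ≤ n) (heven : Even (n - m))
    (r : ℝ) (hr : r ∈ Set.Icc (0:ℝ) 1) :
    |Rz n m r| ≤ 1 := by
  obtain ⟨hr0, hr1⟩ := hr
  obtain ⟨w, hw⟩ := heven
  set b := (n - m) / 2 with hbdef
  set a := (n + m) / 2 with hadef
  have hba : b ≤ a := by omega
  have hab : a + b = n := by omega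
  set s := Real.sqrt (1 - r^2) with hsdef
  have hs2 : s^2 = 1 - r^2 := Real.sq_sqrt (by nlinarith)
  have hcs : r^2 + s^2 = 1 := by rw [hs2]; ring
  have hkey := key_bound r s hcs a b hba
  have hRz : Rz n m r = ∑ q ∈ range (b+1),
      (-1:ℝ)^q * ((a.choose q : ℝ) * (b.choose q)) * r^(a+b-2*q) * s^(2*q) := by
    unfold Rz
    rw [← hbdef, ← hadef]
    calc ∑ l ∈ range (b+1),
        (-1 : ℝ) ^ l * (Nat.factorial (n - l) : ℝ) /
          ((Nat.factorial l : ℝ) * (Nat.factorial (b - l) : ℝ) *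
            (Nat.factorial (a - l) : ℝ)) * r ^ (n - 2 * l)
        = ∑ l ∈ range (b+1),
            (-1:ℝ)^l * ((a+b-l).factorial : ℝ) /
              ((l.factorial : ℝ) * ((b-l).factorial : ℝ) * ((a-l).factorial : ℝ)) *
              r^(a+b-2*l) := by
          refine Finset.sum_congr rfl fun l hl => ?_
          have hl' : l ≤ b := by have := mem_range.1 hl; omega
          rw [show n - l = a+b-l by omega, show n - 2*l = a+b-2*l by omega]
      _ = ∑ q ∈ range (b+1),
            (-1:ℝ)^q * ((a.choose q : ℝ) * (b.choose q)) * r^(a+b-2*q) * (1-r^2)^q :=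
          (idA a b hba r).symm
      _ = ∑ q ∈ range (b+1),
            (-1:ℝ)^q * ((a.choose q : ℝ) * (b.choose q)) * r^(a+b-2*q) * s^(2*q) := by
          refine Finset.sum_congr rfl fun q _ => ?_
          rw [pow_mul, hs2]
  rw [hRz]
  exact hkey
end
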